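/- arXiv:1104.4255 — 3 statements merged into one kernel-verified Lean document; each statement's English description precedes it below -/
import Mathlib

section
/- Let N ≥ 2, points x₁,…,x_N ∈ ℝ², and η > 0. Then there exist κ ∈ {9⁰, 9¹, …, 9^{N−1}} and a subset {y₁,…,y_{N'}} ⊆ {x₁,…,x_N} such that ⋃_{i=1}^{N} B(x_i, η) ⊆ ⋃_{i=1}^{N'} B(y_i, κη) and |y_i − y_j| ≥ 8κη for all i ≠ j. -/
open Metric Set

lemma stmt2_aux {α : Type*} [MetricSpace α] [DecidableEq α] (s : Finset α) :
    ∀ η : ℝ, 0 < η → s.Nonempty →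
    ∃ m : ℕ, m < s.card ∧ ∃ t : Finset α, t ⊆ s ∧ t.Nonempty ∧
      (⋃ p ∈ s, ball p η) ⊆ (⋃ p ∈ t, ball p ((9:ℝ)^m * η)) ∧
      ∀ p ∈ t, ∀ q ∈ t, p ≠ q → 8 * 9^m * η ≤ dist p q := by
  induction s using Finset.strongInduction with
  | _ s ih =>
    intro η hη hs
    by_cases hsep : ∀ p ∈ s, ∀ q ∈ s, p ≠ q → 8 * η ≤ dist p q
    · exact ⟨0, hs.card_pos, s, le_refl _, hs, by simp, by simpa using hsep⟩
    · push_neg at hsep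
      obtain ⟨p, hp, q, hq, hpq, hd⟩ := hsep
      set s' := s.erase q with hs'
      have hss : s' ⊂ s := Finset.erase_ssubset hq
      have hps' : p ∈ s' := Finset.mem_erase.mpr ⟨hpq, hp⟩
      obtain ⟨m, hm, t, hts, htne, hcov, hsepa⟩ :=
        ih s' hss (9 * η) (by positivity) ⟨p, hps'⟩
      have hcard : s'.card < s.card := Finset.card_lt_card hss
      refine ⟨m + 1, by omega, t, hts.trans (Finset.erase_subset _ _), htne, ?_, ?_⟩
      · have h1 : (⋃ r ∈ s, ball r η) ⊆ ⋃ r ∈ s', ball r (9 * η) := by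
          intro z hz
          simp only [mem_iUnion, exists_prop] at hz ⊢
          obtain ⟨r, hr, hzr⟩ := hz
          by_cases hrq : r = q
          · refine ⟨p, hps', ?_⟩
            rw [mem_ball] at hzr ⊢
            calc dist z p ≤ dist z q + dist q p := dist_triangle _ _ _
              _ < η + 8 * η := by
                  rw [dist_comm q p]
                  exact add_lt_add (hrq ▸ hzr) hd
              _ = 9 * η := by ring
          · exact ⟨r, Finset.mem_erase.mpr ⟨hrq, hr⟩, ball_subset_ball (by nlinarith) hzr⟩
        refine h1.trans (hcov.trans ?_)
        apply Set.iUnion₂_mono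
        intro r hr
        apply ball_subset_ball
        rw [pow_succ]
        ring_nf
        exact le_refl _
      · intro a ha b hb hab
        have := hsepa a ha b hb hab
        rw [pow_succ]
        nlinarith
  
/-- Ball-merging (separation) lemma: any finite family of balls of equal radius `η`
in `ℝ²` can be covered by a subfamily of concentric balls of radius `κη`, with
`κ = 9^m` for some `m < N`, whose centers are `8κη`-separated. -/
theorem stmt2 (N : ℕ) (hN : 2 ≤ N) (x : Fin N → EuclideanSpace ℝ (Fin 2))
    (η : ℝ) (hη : 0 < η) :
    ∃ (m : ℕ), m < N ∧ ∃ (κ : ℝ), κ = 9 ^ m ∧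
      ∃ (N' : ℕ) (y : Fin N' → EuclideanSpace ℝ (Fin 2)),
        (∀ j, ∃ i, y j = x i) ∧
        (⋃ i, ball (x i) η) ⊆ (⋃ j, ball (y j) (κ * η)) ∧
        (∀ j j', j ≠ j' → 8 * κ * η ≤ dist (y j) (y j')) := by
  classical
  set s : Finset (EuclideanSpace ℝ (Fin 2)) := Finset.image x Finset.univ with hsdef
  have hsne : s.Nonempty := ⟨x ⟨0, by omega⟩, Finset.mem_image_of_mem _ (Finset.mem_univ _)⟩
  obtain ⟨m, hm, t, hts, htne, hcov, hsepa⟩ := stmt2_aux s η hη hsne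
  have hcardN : s.card ≤ N := le_trans Finset.card_image_le (by simp)
  refine ⟨m, lt_of_lt_of_le hm hcardN, (9:ℝ)^m, rfl, t.card, fun j => (t.equivFin.symm j : _), ?_, ?_, ?_⟩
  · intro j
    have ht : ((t.equivFin.symm j : _) : EuclideanSpace ℝ (Fin 2)) ∈ t := (t.equivFin.symm j).2
    have hmem := hts ht
    rw [hsdef, Finset.mem_image] at hmem
    obtain ⟨i, _, hi⟩ := hmem
    exact ⟨i, hi.symm⟩
  · intro z hz
    simp only [mem_iUnion] at hz ⊢
    obtain ⟨i, hzi⟩ := hz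
    have hxi : x i ∈ s := Finset.mem_image_of_mem _ (Finset.mem_univ _)
    have : z ∈ ⋃ p ∈ t, ball p ((9:ℝ)^m * η) := hcov (mem_iUnion₂.mpr ⟨x i, hxi, hzi⟩)
    obtain ⟨p, hp, hzp⟩ := mem_iUnion₂.mp this
    exact ⟨t.equivFin ⟨p, hp⟩, by simpa using hzp⟩
  · intro j j' hjj
    apply hsepa _ (t.equivFin.symm j).2 _ (t.equivFin.symm j').2
    intro h
    apply hjj
    have : t.equivFin.symm j = t.equivFin.symm j' := Subtype.ext h
    exact t.equivFin.symm.injective this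
end

section
/- Let b ∈ (0,1). The function U_b : ℝ → ℝ defined by U_b(x) = (A e^{√2 x} − 1)/(A e^{√2 x} + 1) for x ≥ 0 and U_b(x) = b(B e^{−b√2 x} − 1)/(B e^{−b√2 x} + 1) for x < 0, where B = −(3b² + 1 + 2b√(2(b²+1)))/(1 − b²) and A = (B(1+b) + 1 − b)/(B(1−b) + 1 + b), satisfies: −U_b'' = U_b(1 − U_b²) on (0,∞), −U_b'' = U_b(b² − U_b²) on (−∞,0), U_b is C¹ on ℝ, U_b is strictly increasing, lim_{x→+∞} U_b(x) = 1, lim_{x→−∞} U_b(x) = b, and U_b(0) = √((b²+1)/2). -/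
/-!
On each half-line the profile is a kink `u = a (C e^{kx} - 1) / (C e^{kx} + 1)` (a `tanh` for
`C > 0`, a `coth` for `C < 0`), which solves the Riccati equation `u' = c (a² - u²)` with
`c = k / (2a)`. Differentiating once more gives `u'' = -2c² u (a² - u²)`, the Ginzburg–Landau
equation when `c = ±√2/2`. The two first-order equations `u' = (√2/2)(1 - u²)` on the right and
`u' = -(√2/2)(b² - u²)` on the left agree exactly when `u² = (1 + b²)/2`, so `C¹` matching forces
`u(0) = √((1 + b²)/2)`; `A` and `B` are the Cayley transforms `(1 + v)/(1 - v)` that make both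
pieces take this value at `0`. Since `A > 0` and `B < -1`, neither piece has a pole on its
half-line, both derivatives are positive, and the limits are read off the formulas.
-/

open Filter Topology Set Real

theorem hasDerivAt_ite_le {f g f' g' : ℝ → ℝ} {a : ℝ}
    (hf : ∀ x, a ≤ x → HasDerivAt f (f' x) x) (hg : ∀ x ≤ a, HasDerivAt g (g' x) x)
    (h : f a = g a) (h' : f' a = g' a) (x : ℝ) :
    HasDerivAt (fun y => if a ≤ y then f y else g y) (if a ≤ x then f' x else g' x) x := by
  rcases lt_trichotomy x a with hx | rfl | hx
  · rw [if_neg hx.not_ge]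
    refine (hg x hx.le).congr_of_eventuallyEq ?_
    filter_upwards [Iio_mem_nhds hx] with y hy using if_neg hy.not_ge
  · rw [if_pos le_rfl]
    have hr : HasDerivWithinAt (fun y => if x ≤ y then f y else g y) (f' x) (Ici x) x :=
      (hf x le_rfl).hasDerivWithinAt.congr (fun y hy => if_pos hy) (if_pos le_rfl)
    have hl : HasDerivWithinAt (fun y => if x ≤ y then f y else g y) (f' x) (Iic x) x := by
      rw [h']
      refine (hg x le_rfl).hasDerivWithinAt.congr (fun y hy => ?_) (by rw [if_pos le_rfl, h])
      rcases (mem_Iic.1 hy).lt_or_eq with hy | rfl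
      · exact if_neg hy.not_ge
      · rw [if_pos le_rfl, h]
    simpa only [Iic_union_Ici, hasDerivWithinAt_univ] using hl.union hr
  · rw [if_pos hx.le]
    refine (hf x hx.le).congr_of_eventuallyEq ?_
    filter_upwards [Ioi_mem_nhds hx] with y hy using if_pos hy.le

theorem HasDerivAt.riccati {u : ℝ → ℝ} {c m x : ℝ} (hu : HasDerivAt u (c * (m - u x ^ 2)) x) :
    HasDerivAt (fun y => c * (m - u y ^ 2)) (-(2 * c ^ 2 * u x * (m - u x ^ 2))) x := by
  refine (((hu.pow 2).const_sub m).const_mul c).congr_deriv ?_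
  norm_num
  ring

noncomputable def cayley (v : ℝ) : ℝ := (1 + v) / (1 - v)

theorem cayley_pos {v : ℝ} (h₀ : -1 < v) (h₁ : v < 1) : 0 < cayley v :=
  div_pos (by linarith) (by linarith)

theorem cayley_lt_neg_one {v : ℝ} (hv : 1 < v) : cayley v < -1 := by
  rw [cayley, div_lt_iff_of_neg (by linarith)]
  linarith

theorem cayley_mul (b : ℝ) {v : ℝ} (hv : v ≠ 1) :
    cayley (b * v) = (cayley v * (1 + b) + 1 - b) / (cayley v * (1 - b) + 1 + b) := by
  have hv' : 1 - v ≠ 0 := sub_ne_zero.2 hv.symm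
  unfold cayley
  rw [show (1 + v) / (1 - v) * (1 + b) + 1 - b = 2 * (1 + b * v) / (1 - v) by field_simp; ring,
    show (1 + v) / (1 - v) * (1 - b) + 1 + b = 2 * (1 - b * v) / (1 - v) by field_simp; ring,
    div_div_div_cancel_right₀ hv', mul_div_mul_left _ _ two_ne_zero]

noncomputable def expRatio (k C x : ℝ) : ℝ := (C * exp (k * x) - 1) / (C * exp (k * x) + 1)

section expRatio

variable {k C x : ℝ}

theorem expRatio_cayley_zero (k : ℝ) {v : ℝ} (hv : v ≠ 1) : expRatio k (cayley v) 0 = v := by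
  have hv' : 1 - v ≠ 0 := sub_ne_zero.2 hv.symm
  simp only [expRatio, mul_zero, exp_zero, mul_one, cayley]
  field_simp
  ring

theorem one_sub_expRatio_sq (hx : C * exp (k * x) + 1 ≠ 0) :
    1 - expRatio k C x ^ 2 = 4 * C * exp (k * x) / (C * exp (k * x) + 1) ^ 2 := by
  rw [expRatio]
  field_simp
  ring

theorem hasDerivAt_expRatio (hx : C * exp (k * x) + 1 ≠ 0) :
    HasDerivAt (expRatio k C) (k / 2 * (1 - expRatio k C x ^ 2)) x := by
  have he : HasDerivAt (fun y => C * exp (k * y)) (C * exp (k * x) * k) x := by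
    simpa [mul_assoc, mul_comm k] using ((hasDerivAt_mul_const k).exp).const_mul C
  refine ((he.sub_const 1).div (he.add_const 1) hx).congr_deriv ?_
  rw [one_sub_expRatio_sq hx]
  field_simp
  ring

theorem expRatio_sq_lt_one (hC : 0 < C) : expRatio k C x ^ 2 < 1 := by
  have hx : 0 < C * exp (k * x) + 1 := by positivity
  have h := one_sub_expRatio_sq (k := k) hx.ne'
  have : 0 < 4 * C * exp (k * x) / (C * exp (k * x) + 1) ^ 2 := by positivity
  linarith

theorem one_lt_expRatio_sq (hx : C * exp (k * x) + 1 ≠ 0) (hC : C < 0) :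
    1 < expRatio k C x ^ 2 := by
  have h := one_sub_expRatio_sq hx
  have : 4 * C * exp (k * x) / (C * exp (k * x) + 1) ^ 2 < 0 :=
    div_neg_of_neg_of_pos (by nlinarith [exp_pos (k * x)]) (by positivity)
  linarith

theorem tendsto_expRatio {l : Filter ℝ} (hC : C ≠ 0) (hl : Tendsto (fun x => k * x) l atTop) :
    Tendsto (expRatio k C) l (𝓝 1) := by
  have he : Tendsto (fun x => exp (-(k * x))) l (𝓝 0) := tendsto_exp_neg_atTop_nhds_zero.comp hl
  have hlim : Tendsto (fun x => (C - exp (-(k * x))) / (C + exp (-(k * x)))) l (𝓝 1) := by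
    have h := (he.const_sub C).div (he.const_add C) (by simpa using hC)
    rwa [sub_zero, add_zero, div_self hC] at h
  refine hlim.congr fun x => ?_
  rw [expRatio, ← mul_div_mul_right (C * exp (k * x) - 1) _ (exp_pos (-(k * x))).ne']
  congr 1 <;> simp [sub_mul, add_mul, mul_assoc, ← exp_add]

theorem mul_exp_add_one_neg (hC : C < -1) (hkx : 0 ≤ k * x) : C * exp (k * x) + 1 < 0 := by
  nlinarith [one_le_exp hkx]

end expRatio

namespace GinzburgLandau

noncomputable def junction (b : ℝ) : ℝ := √((b ^ 2 + 1) / 2)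

noncomputable def rightPiece (b : ℝ) : ℝ → ℝ := expRatio √2 (cayley (junction b))

noncomputable def leftPiece (b x : ℝ) : ℝ := b * expRatio (-(b * √2)) (cayley (junction b / b)) x

noncomputable def profile (b x : ℝ) : ℝ := if 0 ≤ x then rightPiece b x else leftPiece b x

noncomputable def profileDeriv (b x : ℝ) : ℝ :=
  if 0 ≤ x then √2 / 2 * (1 - rightPiece b x ^ 2) else -(√2 / 2) * (b ^ 2 - leftPiece b x ^ 2)

variable {b x : ℝ}

theorem junction_sq (b : ℝ) : junction b ^ 2 = (b ^ 2 + 1) / 2 := sq_sqrt (by positivity)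

theorem sqrt_two_mul_eq_two_mul_junction (b : ℝ) : √(2 * (b ^ 2 + 1)) = 2 * junction b := by
  rw [junction, show 2 * (b ^ 2 + 1) = 2 ^ 2 * ((b ^ 2 + 1) / 2) by ring,
    sqrt_mul (by norm_num), sqrt_sq (by norm_num)]

theorem lt_junction (hb : b ∈ Ioo 0 1) : b < junction b := by
  rw [junction, lt_sqrt hb.1.le]
  nlinarith [hb.1, hb.2]

theorem junction_lt_one (hb : b ∈ Ioo 0 1) : junction b < 1 := by
  rw [junction, sqrt_lt' one_pos]
  nlinarith [hb.1, hb.2]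

theorem neg_div_eq_cayley (hb : b ∈ Ioo 0 1) :
    -(3 * b ^ 2 + 1 + 2 * b * √(2 * (b ^ 2 + 1))) / (1 - b ^ 2) = cayley (junction b / b) := by
  have hb0 := hb.1.ne'
  have hb2 : 1 - b ^ 2 ≠ 0 := by nlinarith [hb.1, hb.2]
  have hbj : b - junction b ≠ 0 := sub_ne_zero.2 (lt_junction hb).ne
  rw [sqrt_two_mul_eq_two_mul_junction, cayley]
  field_simp
  linear_combination (4 * b) * junction_sq b

theorem cayley_junction_pos (hb : b ∈ Ioo 0 1) : 0 < cayley (junction b) :=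
  cayley_pos (neg_one_lt_zero.trans_le (sqrt_nonneg _)) (junction_lt_one hb)

theorem cayley_junction_div_lt (hb : b ∈ Ioo 0 1) : cayley (junction b / b) < -1 :=
  cayley_lt_neg_one ((one_lt_div hb.1).2 (lt_junction hb))

theorem hasDerivAt_rightPiece (hb : b ∈ Ioo 0 1) (x : ℝ) :
    HasDerivAt (rightPiece b) (√2 / 2 * (1 - rightPiece b x ^ 2)) x :=
  hasDerivAt_expRatio (add_pos (mul_pos (cayley_junction_pos hb) (exp_pos _)) one_pos).ne'

theorem leftPiece_den_neg (hb : b ∈ Ioo 0 1) (hx : x ≤ 0) :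
    cayley (junction b / b) * exp (-(b * √2) * x) + 1 < 0 := by
  refine mul_exp_add_one_neg (cayley_junction_div_lt hb) ?_
  rw [neg_mul_comm]
  exact mul_nonneg (mul_nonneg hb.1.le (sqrt_nonneg 2)) (neg_nonneg.2 hx)

theorem hasDerivAt_leftPiece (hb : b ∈ Ioo 0 1) (hx : x ≤ 0) :
    HasDerivAt (leftPiece b) (-(√2 / 2) * (b ^ 2 - leftPiece b x ^ 2)) x := by
  refine ((hasDerivAt_expRatio (leftPiece_den_neg hb hx).ne).const_mul b).congr_deriv ?_
  rw [leftPiece]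
  ring

theorem rightPiece_zero (hb : b ∈ Ioo 0 1) : rightPiece b 0 = junction b :=
  expRatio_cayley_zero _ (junction_lt_one hb).ne

theorem leftPiece_zero (hb : b ∈ Ioo 0 1) : leftPiece b 0 = junction b := by
  rw [leftPiece, expRatio_cayley_zero _ ((one_lt_div hb.1).2 (lt_junction hb)).ne',
    mul_div_cancel₀ _ hb.1.ne']

theorem hasDerivAt_profile (hb : b ∈ Ioo 0 1) (x : ℝ) :
    HasDerivAt (profile b) (profileDeriv b x) x := by
  refine hasDerivAt_ite_le (fun y _ => hasDerivAt_rightPiece hb y)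
    (fun y hy => hasDerivAt_leftPiece hb hy) (by rw [rightPiece_zero hb, leftPiece_zero hb]) ?_ x
  rw [rightPiece_zero hb, leftPiece_zero hb]
  linear_combination (-√2) * junction_sq b

theorem deriv_profile (hb : b ∈ Ioo 0 1) : deriv (profile b) = profileDeriv b :=
  funext fun x => (hasDerivAt_profile hb x).deriv

theorem two_mul_half_sqrt_two_sq : 2 * (√2 / 2) ^ 2 = 1 := by
  rw [div_pow, sq_sqrt zero_le_two]
  norm_num

theorem deriv_deriv_profile_of_pos (hb : b ∈ Ioo 0 1) (hx : 0 < x) :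
    deriv (deriv (profile b)) x = -(profile b x * (1 - profile b x ^ 2)) := by
  have hev : deriv (profile b) =ᶠ[𝓝 x] fun y => √2 / 2 * (1 - rightPiece b y ^ 2) := by
    rw [deriv_profile hb]
    filter_upwards [Ioi_mem_nhds hx] with y hy using if_pos hy.le
  rw [hev.deriv_eq, (hasDerivAt_rightPiece hb x).riccati.deriv, two_mul_half_sqrt_two_sq, profile,
    if_pos hx.le, one_mul]

theorem deriv_deriv_profile_of_neg (hb : b ∈ Ioo 0 1) (hx : x < 0) :
    deriv (deriv (profile b)) x = -(profile b x * (b ^ 2 - profile b x ^ 2)) := by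
  have hev : deriv (profile b) =ᶠ[𝓝 x] fun y => -(√2 / 2) * (b ^ 2 - leftPiece b y ^ 2) := by
    rw [deriv_profile hb]
    filter_upwards [Iio_mem_nhds hx] with y hy using if_neg hy.not_ge
  rw [hev.deriv_eq, (hasDerivAt_leftPiece hb hx.le).riccati.deriv, neg_sq, two_mul_half_sqrt_two_sq,
    profile, if_neg hx.not_ge, one_mul]

theorem continuous_profileDeriv (hb : b ∈ Ioo 0 1) : Continuous (profileDeriv b) := by
  have hright : Continuous (rightPiece b) :=
    continuous_iff_continuousAt.2 fun x => (hasDerivAt_rightPiece hb x).continuousAt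
  have hleft : ContinuousOn (leftPiece b) {x | x ≤ 0} :=
    continuousOn_of_forall_continuousAt fun x hx => (hasDerivAt_leftPiece hb hx).continuousAt
  refine continuous_if_le continuous_const continuous_id (by fun_prop) (by fun_prop) fun x hx => ?_
  subst hx
  rw [rightPiece_zero hb, leftPiece_zero hb]
  linear_combination (-√2) * junction_sq b

theorem contDiff_profile (hb : b ∈ Ioo 0 1) : ContDiff ℝ 1 (profile b) :=
  contDiff_one_iff_deriv.2
    ⟨fun x => (hasDerivAt_profile hb x).differentiableAt,
      deriv_profile hb ▸ continuous_profileDeriv hb⟩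

theorem profileDeriv_pos (hb : b ∈ Ioo 0 1) (x : ℝ) : 0 < profileDeriv b x := by
  have hs : 0 < √2 / 2 := by positivity
  rcases le_or_gt 0 x with hx | hx
  · rw [profileDeriv, if_pos hx]
    exact mul_pos hs (sub_pos.2 (expRatio_sq_lt_one (cayley_junction_pos hb)))
  · rw [profileDeriv, if_neg hx.not_ge, leftPiece]
    have h := one_lt_expRatio_sq (leftPiece_den_neg hb hx.le).ne
      ((cayley_junction_div_lt hb).trans neg_one_lt_zero)
    linarith [mul_pos (mul_pos hs (pow_pos hb.1 2)) (sub_pos.2 h)]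

theorem strictMono_profile (hb : b ∈ Ioo 0 1) : StrictMono (profile b) :=
  strictMono_of_deriv_pos fun x => deriv_profile hb ▸ profileDeriv_pos hb x

theorem tendsto_profile_atTop (hb : b ∈ Ioo 0 1) : Tendsto (profile b) atTop (𝓝 1) := by
  have hk : Tendsto (fun x => √2 * x) atTop atTop :=
    tendsto_id.const_mul_atTop (sqrt_pos.2 two_pos)
  refine (tendsto_expRatio (cayley_junction_pos hb).ne' hk).congr' ?_
  filter_upwards [eventually_ge_atTop 0] with x hx using (if_pos hx).symm

theorem tendsto_profile_atBot (hb : b ∈ Ioo 0 1) : Tendsto (profile b) atBot (𝓝 b) := by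
  have hC : cayley (junction b / b) ≠ 0 := (cayley_junction_div_lt hb).trans neg_one_lt_zero |>.ne
  have hk : -(b * √2) < 0 := neg_lt_zero.2 (mul_pos hb.1 (sqrt_pos.2 two_pos))
  have h := (tendsto_expRatio hC (tendsto_id.const_mul_atBot_of_neg hk)).const_mul b
  rw [mul_one] at h
  refine h.congr' ?_
  filter_upwards [eventually_lt_atBot 0] with x hx using (if_neg hx.not_ge).symm

theorem profile_zero (hb : b ∈ Ioo 0 1) : profile b 0 = junction b := by
  rw [profile, if_pos le_rfl, rightPiece_zero hb]

end GinzburgLandau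

open GinzburgLandau in
/-- The explicit one-dimensional Ginzburg–Landau transition profile `U_b` between
densities `b` and `1`: it solves `−U'' = U(1−U²)` on `(0,∞)`, `−U'' = U(b²−U²)`
on `(−∞,0)`, is `C¹`, strictly increasing, tends to `1` at `+∞` and `b` at `−∞`,
and takes the value `√((b²+1)/2)` at `0`. -/
theorem stmt3 (b : ℝ) (hb : b ∈ Set.Ioo (0:ℝ) 1) :
    let B : ℝ := -(3 * b ^ 2 + 1 + 2 * b * Real.sqrt (2 * (b ^ 2 + 1))) / (1 - b ^ 2)
    let A : ℝ := (B * (1 + b) + 1 - b) / (B * (1 - b) + 1 + b)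
    let U : ℝ → ℝ := fun x =>
      if 0 ≤ x then (A * Real.exp (Real.sqrt 2 * x) - 1) / (A * Real.exp (Real.sqrt 2 * x) + 1)
      else b * (B * Real.exp (-(b * Real.sqrt 2 * x)) - 1) / (B * Real.exp (-(b * Real.sqrt 2 * x)) + 1)
    (∀ x ∈ Set.Ioi (0:ℝ), deriv (deriv U) x = -(U x * (1 - U x ^ 2))) ∧
    (∀ x ∈ Set.Iio (0:ℝ), deriv (deriv U) x = -(U x * (b ^ 2 - U x ^ 2))) ∧
    ContDiff ℝ 1 U ∧
    StrictMono U ∧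
    Tendsto U atTop (𝓝 1) ∧
    Tendsto U atBot (𝓝 b) ∧
    U 0 = Real.sqrt ((b ^ 2 + 1) / 2) := by
  intro B A U
  have hB : B = cayley (junction b / b) := neg_div_eq_cayley hb
  have hA : A = cayley (junction b) := by
    have hv : junction b / b ≠ 1 := ((one_lt_div hb.1).2 (lt_junction hb)).ne'
    simp only [A, hB, ← cayley_mul b hv, mul_div_cancel₀ _ hb.1.ne']
  have hU : U = profile b := by
    funext x
    simp only [U, profile, rightPiece, leftPiece, expRatio, hA, hB, neg_mul, mul_div_assoc]
  rw [hU]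
  exact ⟨fun x hx => deriv_deriv_profile_of_pos hb hx, fun x hx => deriv_deriv_profile_of_neg hb hx,
    contDiff_profile hb, strictMono_profile hb, tendsto_profile_atTop hb, tendsto_profile_atBot hb,
    profile_zero hb⟩
end

section
/- Let 0 < λ ≤ 1/(8π), δ > 0, and let ω_per = ⋃_{(k,l)∈ℤ²} ((δk, δl) + λδ·ω̄) where ω ⊂ B(0,1) ⊂ ℝ². Then for any circle C_ρ of radius ρ ≥ δ/3, the 1-dimensional Hausdorff measure of C_ρ ∩ ω_per is at most 16π²λρ. -/
/-!
Every inclusion `(δk, δl) + λδ·ω̄` lies in the closed disc of radius `r = λδ` about its lattice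
point. A circle of radius `ρ` meets such a disc in an arc of angular half-width at most `π r / ρ`
(the chord is at most `2r`, and `2 ρ |sin (u / 2)| ≥ 2 ρ |u| / π` by Jordan's inequality), so
the arc has length at most `2π r`. Only lattice points within `r` of the circle contribute; the
discs of radius `δ/2` about them are disjoint and lie in the annulus
`ρ - r - δ/2 < |z - c| < ρ + r + δ/2`, so comparing areas bounds their number by `16ρ/δ`.
The total length is therefore at most `(16ρ/δ) · 2πλδ = 32πλρ ≤ 16π²λρ`.
-/

open MeasureTheory Metric Set

open Complex

open scoped Real

lemma two_div_pi_mul_abs_le_norm_exp_I_mul_ofReal_sub_one {u : ℝ} (hu : |u| ≤ π) :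
    2 / π * |u| ≤ ‖exp (I * u) - 1‖ := by
  have h := Real.mul_abs_le_abs_sin (x := u / 2) (by rw [abs_div, abs_two]; linarith)
  rw [abs_div, abs_two] at h
  rw [Complex.norm_exp_I_mul_ofReal_sub_one, norm_mul, Real.norm_eq_abs, Real.norm_eq_abs, abs_two]
  linarith

lemma dist_circleMap_circleMap (c : ℂ) (R s t : ℝ) :
    dist (circleMap c R s) (circleMap c R t) =
      |R| * ‖exp (I * (s - t : ℝ)) - 1‖ := by
  have h : circleMap c R s - circleMap c R t
      = R * exp (t * I) * (exp (I * (s - t : ℝ)) - 1) := by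
    rw [circleMap, circleMap, mul_sub, mul_assoc, ← exp_add]
    push_cast
    ring_nf
  rw [dist_eq_norm, h, norm_mul, norm_mul, Complex.norm_exp_ofReal_mul_I, Complex.norm_real,
    Real.norm_eq_abs, mul_one]

lemma dist_circleMap_arg_sub (c p : ℂ) (R : ℝ) :
    dist p (circleMap c R (arg (p - c))) = |dist p c - R| := by
  have h : p - circleMap c R (arg (p - c))
      = ((dist p c - R : ℝ) : ℂ) * exp (arg (p - c) * I) := by
    rw [circleMap, dist_eq_norm]
    push_cast
    linear_combination (Complex.norm_mul_exp_arg_mul_I (p - c)).symm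
  rw [dist_eq_norm, h, norm_mul, Complex.norm_exp_ofReal_mul_I, Complex.norm_real,
    Real.norm_eq_abs, mul_one]

lemma exists_circleMap_eq_of_mem_sphere {c z : ℂ} {R : ℝ} (hz : z ∈ sphere c R) (θ : ℝ) :
    ∃ t, |t - θ| ≤ π ∧ circleMap c R t = z := by
  set w := (z - c) * exp ((-θ : ℝ) * I)
  have hw : ‖w‖ = R := by
    rw [norm_mul, Complex.norm_exp_ofReal_mul_I, mul_one, ← dist_eq_norm, mem_sphere.mp hz]
  refine ⟨θ + arg w, by simpa using Complex.abs_arg_le_pi w, ?_⟩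
  have hpolar := Complex.norm_mul_exp_arg_mul_I w
  rw [hw] at hpolar
  calc circleMap c R (θ + arg w)
      = c + exp (θ * I) * (R * exp (arg w * I)) := by
        rw [circleMap]; push_cast; rw [add_mul, exp_add]; ring
    _ = z := by
        rw [hpolar, ← mul_assoc, mul_comm _ (z - c), mul_assoc, ← exp_add]
        push_cast
        simp

lemma sphere_inter_closedBall_subset_image_circleMap (c p : ℂ) {ρ : ℝ} (hρ : 0 < ρ) (r : ℝ) :
    sphere c ρ ∩ closedBall p r ⊆
      circleMap c ρ '' Icc (arg (p - c) - π * r / ρ) (arg (p - c) + π * r / ρ) := by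
  rintro z ⟨hz, hzp⟩
  set θ := arg (p - c)
  obtain ⟨t, htθ, rfl⟩ := exists_circleMap_eq_of_mem_sphere hz θ
  refine ⟨t, ?_, rfl⟩
  have hp : dist p (circleMap c ρ θ) ≤ r := by
    rw [dist_circleMap_arg_sub, ← mem_sphere.mp hz]
    exact (abs_dist_sub_le p _ c).trans (by rw [dist_comm]; exact hzp)
  have hchord : dist (circleMap c ρ t) (circleMap c ρ θ) ≤ 2 * r := by
    linarith [dist_triangle (circleMap c ρ t) p (circleMap c ρ θ), mem_closedBall.mp hzp]
  rw [dist_circleMap_circleMap, abs_of_pos hρ] at hchord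
  have hangle : ρ * (2 / π * |t - θ|) ≤ 2 * r :=
    (mul_le_mul_of_nonneg_left (two_div_pi_mul_abs_le_norm_exp_I_mul_ofReal_sub_one htθ)
      hρ.le).trans hchord
  have : |t - θ| ≤ π * r / ρ := by
    rw [le_div_iff₀ hρ]
    field_simp at hangle
    linarith
  constructor <;> linarith [abs_le.mp this]

lemma hausdorffMeasure_sphere_inter_closedBall_le (c p : ℂ) {ρ : ℝ} (hρ : 0 < ρ) (r : ℝ) :
    μH[1] (sphere c ρ ∩ closedBall p r) ≤ ENNReal.ofReal (2 * π * r) := by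
  set θ := arg (p - c)
  calc μH[1] (sphere c ρ ∩ closedBall p r)
      ≤ μH[1] (circleMap c ρ '' Icc (θ - π * r / ρ) (θ + π * r / ρ)) :=
        measure_mono (sphere_inter_closedBall_subset_image_circleMap c p hρ r)
    _ ≤ Real.nnabs ρ ^ (1 : ℝ) * μH[1] (Icc (θ - π * r / ρ) (θ + π * r / ρ)) :=
        (lipschitzWith_circleMap c ρ).hausdorffMeasure_image_le zero_le_one _
    _ = ENNReal.ofReal (2 * π * r) := by
        rw [hausdorffMeasure_real, Real.volume_Icc, ENNReal.rpow_one, Real.nnabs_of_nonneg hρ.le,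
          ENNReal.ofNNReal_toNNReal, ← ENNReal.ofReal_mul hρ.le]
        congr 1
        field_simp
        ring

lemma sphere_inter_biUnion_closedBall_subset (c : ℂ) (ρ r : ℝ) (A : Set ℂ) :
    sphere c ρ ∩ ⋃ q ∈ A, closedBall q r ⊆
      sphere c ρ ∩ ⋃ q ∈ {q ∈ A | |dist q c - ρ| ≤ r}, closedBall q r := by
  rintro z ⟨hz, hzA⟩
  obtain ⟨q, hq, hzq⟩ := mem_iUnion₂.mp hzA
  refine ⟨hz, mem_iUnion₂.mpr ⟨q, ⟨hq, ?_⟩, hzq⟩⟩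
  rw [← mem_sphere.mp hz]
  exact (abs_dist_sub_le q z c).trans (by rw [dist_comm]; exact hzq)

lemma hausdorffMeasure_sphere_inter_biUnion_closedBall_le (c : ℂ) {ρ : ℝ} (hρ : 0 < ρ)
    (T : Finset ℂ) (r : ℝ) :
    μH[1] (sphere c ρ ∩ ⋃ q ∈ T, closedBall q r) ≤ T.card * ENNReal.ofReal (2 * π * r) := by
  rw [inter_iUnion₂]
  calc μH[1] (⋃ q ∈ T, sphere c ρ ∩ closedBall q r)
      ≤ ∑ q ∈ T, μH[1] (sphere c ρ ∩ closedBall q r) := measure_biUnion_finset_le _ _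
    _ ≤ ∑ _q ∈ T, ENNReal.ofReal (2 * π * r) := Finset.sum_le_sum fun q _ =>
        hausdorffMeasure_sphere_inter_closedBall_le c q hρ r
    _ = T.card * ENNReal.ofReal (2 * π * r) := by rw [Finset.sum_const, nsmul_eq_mul]

lemma card_mul_sq_add_sq_le_sq {T : Finset ℂ} {c : ℂ} {ε R₁ R₂ : ℝ} (hε : 0 ≤ ε) (hR₁ : 0 ≤ R₁)
    (hR : R₁ ≤ R₂) (hdisj : (T : Set ℂ).PairwiseDisjoint (ball · ε))
    (hsub : ∀ q ∈ T, ball q ε ⊆ ball c R₂ \ ball c R₁) :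
    T.card * ε ^ 2 + R₁ ^ 2 ≤ R₂ ^ 2 := by
  have hvol : volume (⋃ q ∈ T, ball q ε) + volume (ball c R₁) ≤ volume (ball c R₂) := by
    rw [← measure_union (disjoint_iUnion₂_left.mpr fun q hq => (subset_sdiff.mp (hsub q hq)).2)
      measurableSet_ball]
    exact measure_mono (union_subset (iUnion₂_subset fun q hq => (hsub q hq).trans sdiff_subset)
      (ball_subset_ball hR))
  rw [measure_biUnion_finset hdisj fun _ _ => measurableSet_ball] at hvol
  simp only [Complex.volume_ball, Finset.sum_const, nsmul_eq_mul, ← ENNReal.ofReal_pow hε,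
    ← ENNReal.ofReal_pow hR₁, ← ENNReal.ofReal_pow (hR₁.trans hR), ← ENNReal.ofReal_natCast,
    ← ENNReal.ofReal_coe_nnreal, NNReal.coe_real_pi] at hvol
  rw [← ENNReal.ofReal_mul (by positivity), ← ENNReal.ofReal_mul (by positivity),
    ← ENNReal.ofReal_mul (by positivity), ← ENNReal.ofReal_mul (by positivity),
    ← ENNReal.ofReal_add (by positivity) (by positivity),
    ENNReal.ofReal_le_ofReal_iff (by positivity)] at hvol
  nlinarith [Real.pi_pos]

lemma card_mul_le_of_pairwiseDisjoint_of_abs_dist_sub_le {T : Finset ℂ} {c : ℂ} {ρ r δ : ℝ}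
    (hδ : 0 < δ) (hρ : δ ≤ 3 * ρ) (hr : 0 ≤ r) (hrδ : 24 * r ≤ δ)
    (hdisj : (T : Set ℂ).PairwiseDisjoint (ball · (δ / 2)))
    (hT : ∀ q ∈ T, |dist q c - ρ| ≤ r) :
    T.card * δ ≤ 16 * ρ := by
  set s := r + δ / 2 with hs_def
  have hsub : ∀ q ∈ T, ball q (δ / 2) ⊆ ball c (ρ + s) \ ball c (max (ρ - s) 0) := by
    intro q hq z hz
    have hqc := abs_le.mp (hT q hq)
    have hzq := mem_ball.mp hz
    refine ⟨mem_ball.mpr ?_, fun hzc => ?_⟩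
    · linarith [dist_triangle z q c]
    · rcases lt_max_iff.mp (mem_ball.mp hzc) with h | h
      · linarith [dist_triangle_left q c z]
      · linarith [dist_nonneg (x := z) (y := c)]
  have key := card_mul_sq_add_sq_le_sq (by positivity) (le_max_right _ _)
    (max_le (by linarith) (by linarith)) hdisj hsub
  have hN := T.card.cast_nonneg (α := ℝ)
  suffices T.card * δ ^ 2 ≤ 16 * ρ * δ by nlinarith
  rcases le_total s ρ with hs | hs
  · rw [max_eq_left (by linarith)] at key
    nlinarith
  · -- The annulus is then a disc, and `δ / 3 ≤ ρ ≤ s ≤ 13 δ / 24` still gives `(ρ + s)² ≤ 4ρδ`.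
    rw [max_eq_right (by linarith)] at key
    nlinarith [mul_nonneg (by linarith : 0 ≤ 3 * ρ - δ) (by linarith : 0 ≤ 13 * δ - 24 * ρ)]

lemma finite_and_ncard_mul_le_of_pairwiseDisjoint_of_abs_dist_sub_le {S : Set ℂ} {c : ℂ}
    {ρ r δ : ℝ} (hδ : 0 < δ) (hρ : δ ≤ 3 * ρ) (hr : 0 ≤ r) (hrδ : 24 * r ≤ δ)
    (hdisj : S.PairwiseDisjoint (ball · (δ / 2))) (hS : ∀ q ∈ S, |dist q c - ρ| ≤ r) :
    S.Finite ∧ S.ncard * δ ≤ 16 * ρ := by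
  have hcard : ∀ T : Finset ℂ, ↑T ⊆ S → T.card * δ ≤ 16 * ρ := fun T hT =>
    card_mul_le_of_pairwiseDisjoint_of_abs_dist_sub_le hδ hρ hr hrδ (hdisj.subset hT)
      fun q hq => hS q (hT hq)
  have hfin : S.Finite := by
    by_contra hinf
    obtain ⟨T, hTS, hT⟩ := Set.Infinite.exists_subset_card_eq hinf (⌊16 * ρ / δ⌋₊ + 1)
    have hlt := Nat.lt_floor_add_one (16 * ρ / δ)
    rw [div_lt_iff₀ hδ] at hlt
    have := hcard T hTS
    rw [hT] at this
    push_cast at this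
    linarith
  exact ⟨hfin, by simpa [Set.ncard_eq_toFinset_card S hfin] using hcard hfin.toFinset (by simp)⟩

lemma pairwiseDisjoint_ball_lattice {δ : ℝ} (hδ : 0 ≤ δ) :
    (range fun s : ℤ × ℤ => ((δ * s.1 : ℝ) : ℂ) + ((δ * s.2 : ℝ) : ℂ) * I).PairwiseDisjoint
      (ball · (δ / 2)) := by
  rintro _ ⟨⟨k, l⟩, rfl⟩ _ ⟨⟨k', l'⟩, rfl⟩ hne
  refine ball_disjoint_ball ?_
  rw [add_halves, dist_eq_norm]
  have one_le {m n : ℤ} (h : m ≠ n) : (1 : ℝ) ≤ |(m : ℝ) - n| := by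
    exact_mod_cast Int.one_le_abs (sub_ne_zero.mpr h)
  rcases eq_or_ne k k' with rfl | hk
  · have hl : l ≠ l' := by rintro rfl; exact hne rfl
    refine le_trans ?_ (Complex.abs_im_le_norm _)
    simpa [← mul_sub, abs_mul, abs_of_nonneg hδ] using mul_le_mul_of_nonneg_left (one_le hl) hδ
  · refine le_trans ?_ (Complex.abs_re_le_norm _)
    simpa [← mul_sub, abs_mul, abs_of_nonneg hδ] using mul_le_mul_of_nonneg_left (one_le hk) hδ

lemma image_closure_subset_closedBall {ω : Set ℂ} (hω : ω ⊆ ball 0 1) (a : ℂ) {r : ℝ}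
    (hr : 0 ≤ r) : (fun w => a + (r : ℂ) * w) '' closure ω ⊆ closedBall a r := by
  rintro _ ⟨w, hw, rfl⟩
  have hw1 : ‖w‖ ≤ 1 := by
    simpa using closure_mono hω |>.trans closure_ball_subset_closedBall hw
  rw [mem_closedBall, dist_eq_norm, add_sub_cancel_left, norm_mul, Complex.norm_real,
    Real.norm_of_nonneg hr]
  exact mul_le_of_le_one_right hr hw1

/-- Length bound for the intersection of a large circle with the diluted periodic
inclusion set: if `λ ≤ 1/(8π)` and `ρ ≥ δ/3`, then the 1-dimensional Hausdorff measure
of `C_ρ ∩ ω_per` is at most `16π²λρ`, where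
`ω_per = ⋃_{(k,l)∈ℤ²} ((δk,δl) + λδ·ω̄)` and `ω ⊆ B(0,1)`. -/
theorem stmt10 (lam δ : ℝ) (hlam : 0 < lam) (hlam' : lam ≤ 1 / (8 * Real.pi))
    (hδ : 0 < δ) (ω : Set ℂ) (hω : ω ⊆ ball (0 : ℂ) 1)
    (c : ℂ) (ρ : ℝ) (hρ : δ / 3 ≤ ρ) :
    μH[1] (sphere c ρ ∩
        ⋃ (k : ℤ) (l : ℤ),
          (fun w => ((δ * k : ℝ) : ℂ) + ((δ * l : ℝ) : ℂ) * Complex.I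
              + ((lam * δ : ℝ) : ℂ) * w) '' closure ω)
      ≤ ENNReal.ofReal (16 * Real.pi ^ 2 * lam * ρ) := by
  set L := range fun s : ℤ × ℤ => ((δ * s.1 : ℝ) : ℂ) + ((δ * s.2 : ℝ) : ℂ) * I
  set r := lam * δ
  have hr : 0 ≤ r := by positivity
  have hrδ : 24 * r ≤ δ := by
    rw [le_div_iff₀ (by positivity)] at hlam'
    nlinarith [Real.pi_gt_three]
  have hρ0 : 0 < ρ := by linarith
  obtain ⟨hfin, hcard⟩ := finite_and_ncard_mul_le_of_pairwiseDisjoint_of_abs_dist_sub_le (c := c)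
    hδ (by linarith) hr hrδ ((pairwiseDisjoint_ball_lattice hδ.le).subset (sep_subset L _))
    fun q hq => hq.2
  have hcover : ⋃ (k : ℤ) (l : ℤ), (fun w => ((δ * k : ℝ) : ℂ) + ((δ * l : ℝ) : ℂ) * I
      + (r : ℂ) * w) '' closure ω ⊆ ⋃ q ∈ L, closedBall q r :=
    iUnion₂_subset fun k l => (image_closure_subset_closedBall hω _ hr).trans
      (subset_biUnion_of_mem (u := (closedBall · r)) ⟨(k, l), rfl⟩)
  calc _ ≤ μH[1] (sphere c ρ ∩ ⋃ q ∈ hfin.toFinset, closedBall q r) := by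
        refine measure_mono ((inter_subset_inter_right _ hcover).trans ?_)
        simpa using sphere_inter_biUnion_closedBall_subset c ρ r L
    _ ≤ hfin.toFinset.card * ENNReal.ofReal (2 * π * r) :=
        hausdorffMeasure_sphere_inter_biUnion_closedBall_le c hρ0 _ r
    _ ≤ ENNReal.ofReal (16 * π ^ 2 * lam * ρ) := by
        rw [← ENNReal.ofReal_natCast, ← ENNReal.ofReal_mul (by positivity),
          ← ncard_eq_toFinset_card _ hfin]
        refine ENNReal.ofReal_le_ofReal ?_
        have hπ : 2 ≤ π := by linarith [Real.pi_gt_three]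
        nlinarith [mul_le_mul_of_nonneg_left hcard (by positivity : 0 ≤ 2 * π * lam),
          mul_nonneg (mul_nonneg (sub_nonneg.mpr hπ) (by positivity : 0 ≤ π * lam)) hρ0.le]
end
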